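/- arXiv:math/0205330 — 3 statements merged into one kernel-verified Lean document; each statement's English description precedes it below -/
import Mathlib

section
/- Let K be a field of characteristic zero, V a K-vector space, W ⊆ V a linear subspace, and k ≥ 0. Let δ^V_{k+1} : ⋀^{k+1} V → V ⊗ ⋀^k V and δ^W_{k+1} : ⋀^{k+1} W → W ⊗ ⋀^k W be the Koszul comultiplications, and let j : W ⊗ ⋀^k W → V ⊗ ⋀^k V be the (injective) linear map induced by the inclusion W ⊆ V. If α ∈ W ⊗ ⋀^k W is such that j(α) lies in the image of δ^V_{k+1}, then α lies in the image of δ^W_{k+1}; more precisely, α = (1/(k+1)) · δ^W_{k+1}(w_{k+1}(α)), where w_{k+1} : W ⊗ ⋀^k W → ⋀^{k+1} W is the wedge map. -/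
open ExteriorAlgebra
open scoped TensorProduct

/-- The wedge product `v 0 ∧ ⋯ ∧ v (n-1)` of a family of `n` vectors of `V`, as an element of
the `n`-th exterior power `⋀[K]^n V`. -/
noncomputable def wedgeProd (K : Type*) [Field K] {V : Type*} [AddCommGroup V] [Module K V]
    (n : ℕ) (v : Fin n → V) : ⋀[K]^n V :=
  ⟨ιMulti K n v, ιMulti_range K n ⟨v, rfl⟩⟩

lemma extAlgMap_mem_exteriorPower (K : Type*) [Field K] {W V : Type*}
    [AddCommGroup W] [Module K W] [AddCommGroup V] [Module K V]
    (f : W →ₗ[K] V) (n : ℕ) :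
    ∀ x ∈ ⋀[K]^n W, (ExteriorAlgebra.map f).toLinearMap x ∈ ⋀[K]^n V := by
  intro x hx
  rw [← ιMulti_span_fixedDegree] at hx
  induction hx using Submodule.span_induction with
  | mem y hy =>
      obtain ⟨v, rfl⟩ := hy
      simp only [AlgHom.toLinearMap_apply, map_apply_ιMulti]
      exact ιMulti_range K n ⟨f ∘ v, rfl⟩
  | zero => simp
  | add y z _ _ hy hz => simpa using Submodule.add_mem _ hy hz
  | smul c y _ hy => simpa using Submodule.smul_mem _ c hy

/-- The linear map `⋀^n W → ⋀^n V` functorially induced by a linear map `f : W → V`. -/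
noncomputable def extPowMap (K : Type*) [Field K] {W V : Type*}
    [AddCommGroup W] [Module K W] [AddCommGroup V] [Module K V]
    (f : W →ₗ[K] V) (n : ℕ) : (⋀[K]^n W) →ₗ[K] ⋀[K]^n V :=
  LinearMap.restrict (ExteriorAlgebra.map f).toLinearMap (extAlgMap_mem_exteriorPower K f n)

section KesAux

variable (K : Type*) [Field K] {V : Type*} [AddCommGroup V] [Module K V]

lemma kes_ι_mul_ιMulti (x : V) {n : ℕ} (v : Fin n → V) :
    ι K x * ιMulti K n v = ιMulti K (n+1) (Fin.cons x v) := by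
  rw [ιMulti_succ_apply, Fin.cons_zero]
  congr 1

lemma kes_ι_mul_mem (x : V) {n : ℕ} {y : ExteriorAlgebra K V} (hy : y ∈ ⋀[K]^n V) :
    ι K x * y ∈ ⋀[K]^(n+1) V := by
  rw [show ⋀[K]^(n+1) V = LinearMap.range (ι K : V →ₗ[K] ExteriorAlgebra K V) * ⋀[K]^n V
    from pow_succ' _ n]
  exact Submodule.mul_mem_mul (LinearMap.mem_range_self _ x) hy

lemma kes_wedgeProd_span (n : ℕ) :
    Submodule.span K (Set.range (wedgeProd K n (V := V))) = ⊤ := by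
  rw [Submodule.eq_top_iff']
  intro x
  have key : ∀ y ∈ Submodule.span K (Set.range (ιMulti K n (M := V))),
      y ∈ (Submodule.span K (Set.range (wedgeProd K n (V := V)))).map
        (⋀[K]^n V).subtype := by
    intro y hy
    induction hy using Submodule.span_induction with
    | mem z hz =>
        obtain ⟨v, rfl⟩ := hz
        exact ⟨wedgeProd K n v, Submodule.subset_span ⟨v, rfl⟩, rfl⟩
    | zero => exact Submodule.zero_mem _
    | add a b _ _ ha hb => exact Submodule.add_mem _ ha hb
    | smul c a _ ha => exact Submodule.smul_mem _ c ha
  have hx : (x : ExteriorAlgebra K V) ∈ Submodule.span K (Set.range (ιMulti K n (M := V))) := by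
    rw [ιMulti_span_fixedDegree]; exact x.2
  obtain ⟨z, hz, hzx⟩ := key _ hx
  have : z = x := Subtype.ext hzx
  exact this ▸ hz

noncomputable def kes_wedgeMul (k : ℕ) : V ⊗[K] (⋀[K]^k V) →ₗ[K] ⋀[K]^(k+1) V :=
  TensorProduct.lift
    { toFun := fun x => (LinearMap.mulLeft K (ι K x)).restrict
        (fun _ hy => kes_ι_mul_mem K x hy)
      map_add' := fun x y => by
        refine LinearMap.ext fun z => Subtype.ext ?_
        simp only [LinearMap.restrict_coe_apply, LinearMap.mulLeft_apply, LinearMap.add_apply,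
          Submodule.coe_add, map_add, add_mul]
        rfl
      map_smul' := fun c x => by
        refine LinearMap.ext fun z => Subtype.ext ?_
        simp only [LinearMap.restrict_coe_apply, LinearMap.mulLeft_apply, LinearMap.smul_apply,
          Submodule.coe_smul, map_smul, smul_mul_assoc, RingHom.id_apply]
        rfl }

lemma kes_wedgeMul_tmul (k : ℕ) (x : V) (v : Fin k → V) :
    kes_wedgeMul K k (x ⊗ₜ[K] wedgeProd K k v) = wedgeProd K (k+1) (Fin.cons x v) := by
  apply Subtype.ext
  show ExteriorAlgebra.ι K x * ιMulti K k v = ιMulti K (k+1) (Fin.cons x v)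
  exact kes_ι_mul_ιMulti K x v

lemma kes_wedgeProd_cons (k : ℕ) (v : Fin (k+1) → V) (i : Fin (k+1)) :
    wedgeProd K (k+1) (Fin.cons (v i) (fun j => v (i.succAbove j)))
      = ((-1 : K) ^ (i : ℕ)) • wedgeProd K (k+1) v := by
  have hu : (Fin.cons (v i) (fun j => v (i.succAbove j)) : Fin (k+1) → V)
      = v ∘ ⇑(i.cycleRange.symm) := by
    funext j
    refine Fin.cases ?_ (fun j => ?_) j
    · simp [Fin.cycleRange_symm_zero]
    · simp [Fin.cycleRange_symm_succ]
  apply Subtype.ext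
  show ιMulti K (k+1) _ = ((-1 : K) ^ (i : ℕ)) • ιMulti K (k+1) v
  rw [hu, AlternatingMap.map_perm (ιMulti K (k+1)) v i.cycleRange.symm,
    Equiv.Perm.sign_symm, Fin.sign_cycleRange, Units.smul_def]
  push_cast
  rw [← Int.cast_smul_eq_zsmul K]
  push_cast
  rfl

variable {W : Type*} [AddCommGroup W] [Module K W]

lemma kes_extPowMap_wedgeProd (f : W →ₗ[K] V) (n : ℕ) (v : Fin n → W) :
    extPowMap K f n (wedgeProd K n v) = wedgeProd K n (f ∘ v) := by
  apply Subtype.ext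
  show (ExteriorAlgebra.map f) (ιMulti K n v) = ιMulti K n (f ∘ v)
  exact map_apply_ιMulti f v

lemma kes_extPowMap_comp {U : Type*} [AddCommGroup U] [Module K U]
    (f : U →ₗ[K] W) (g : W →ₗ[K] V) (n : ℕ) (x : ⋀[K]^n U) :
    extPowMap K g n (extPowMap K f n x) = extPowMap K (g ∘ₗ f) n x := by
  apply Subtype.ext
  show (ExteriorAlgebra.map g) ((ExteriorAlgebra.map f) x) = (ExteriorAlgebra.map (g ∘ₗ f)) x
  rw [← map_comp_map]
  rfl

lemma kes_extPowMap_id (n : ℕ) (x : ⋀[K]^n V) :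
    extPowMap K (LinearMap.id : V →ₗ[K] V) n x = x := by
  apply Subtype.ext
  show (ExteriorAlgebra.map LinearMap.id) (x : ExteriorAlgebra K V) = x
  rw [ExteriorAlgebra.map_id]
  rfl

end KesAux

/-- `w ∘ δ = (k+1) • id` for any maps satisfying the defining formulas. -/
lemma kes_w_comp_delta (K : Type*) [Field K] {V : Type*} [AddCommGroup V] [Module K V]
    (k : ℕ) (δ : (⋀[K]^(k+1) V) →ₗ[K] V ⊗[K] (⋀[K]^k V))
    (hδ : ∀ v : Fin (k+1) → V,
      δ (wedgeProd K (k+1) v)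
        = ∑ i : Fin (k+1), ((-1 : K) ^ (i : ℕ)) •
            (v i ⊗ₜ[K] wedgeProd K k (fun j => v (i.succAbove j))))
    (x : ⋀[K]^(k+1) V) :
    kes_wedgeMul K k (δ x) = ((k : K) + 1) • x := by
  have hx : x ∈ Submodule.span K (Set.range (wedgeProd K (k+1) (V := V))) := by
    rw [kes_wedgeProd_span]; exact Submodule.mem_top
  induction hx using Submodule.span_induction with
  | mem y hy =>
      obtain ⟨v, rfl⟩ := hy
      rw [hδ v, map_sum]
      have : ∀ i : Fin (k+1),
          kes_wedgeMul K k (((-1 : K) ^ (i : ℕ)) •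
            (v i ⊗ₜ[K] wedgeProd K k (fun j => v (i.succAbove j))))
          = wedgeProd K (k+1) v := by
        intro i
        rw [map_smul, kes_wedgeMul_tmul, kes_wedgeProd_cons, smul_smul, ← pow_add,
          Even.neg_one_pow ⟨(i : ℕ), rfl⟩, one_smul]
      rw [Finset.sum_congr rfl fun i _ => this i, Finset.sum_const, Finset.card_univ,
        Fintype.card_fin, ← Nat.cast_smul_eq_nsmul K]
      push_cast
      ring_nf
  | zero => simp
  | add a b _ _ ha hb => rw [map_add, map_add, ha, hb, smul_add]
  | smul c a _ ha => rw [map_smul, map_smul, ha, smul_comm]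

set_option maxHeartbeats 1000000 in
/-- Let `K` be a field of characteristic zero, `V` a `K`-vector space,
`W ⊆ V` a subspace and `k ≥ 0`.  Let `δV`, `δW` be the Koszul comultiplications of `V`
and `W` and `j : W ⊗ ⋀^k W → V ⊗ ⋀^k V` the map induced by the inclusion `W ⊆ V`.
If `α ∈ W ⊗ ⋀^k W` is such that `j α` lies in the image of `δV`, then `α` lies in the
image of `δW`; more precisely `α = (1/(k+1)) • δW (w (α))` where `w` is the wedge map. -/
theorem koszul_exact_of_subspace
    (K : Type*) [Field K] [CharZero K] (V : Type*) [AddCommGroup V] [Module K V]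
    (W : Submodule K V) (k : ℕ)
    (δV : (⋀[K]^(k+1) V) →ₗ[K] V ⊗[K] (⋀[K]^k V))
    (hδV : ∀ v : Fin (k+1) → V,
      δV (wedgeProd K (k+1) v)
        = ∑ i : Fin (k+1), ((-1 : K) ^ (i : ℕ)) •
            (v i ⊗ₜ[K] wedgeProd K k (fun j => v (i.succAbove j))))
    (δW : (⋀[K]^(k+1) W) →ₗ[K] W ⊗[K] (⋀[K]^k W))
    (hδW : ∀ v : Fin (k+1) → W,
      δW (wedgeProd K (k+1) v)
        = ∑ i : Fin (k+1), ((-1 : K) ^ (i : ℕ)) •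
            (v i ⊗ₜ[K] wedgeProd K k (fun j => v (i.succAbove j))))
    (w : (W ⊗[K] (⋀[K]^k W)) →ₗ[K] ⋀[K]^(k+1) W)
    (hw : ∀ (x : W) (v : Fin k → W),
      w (x ⊗ₜ[K] wedgeProd K k v) = wedgeProd K (k+1) (Fin.cons x v))
    (α : W ⊗[K] (⋀[K]^k W))
    (hα : TensorProduct.map W.subtype (extPowMap K W.subtype k) α ∈ LinearMap.range δV) :
    α ∈ LinearMap.range δW ∧ α = ((k + 1 : K))⁻¹ • δW (w α) := by
  set j : (W ⊗[K] (⋀[K]^k W)) →ₗ[K] V ⊗[K] (⋀[K]^k V) :=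
    TensorProduct.map W.subtype (extPowMap K W.subtype k) with hj
  -- naturality: j ∘ δW = δV ∘ extPowMap (k+1)
  have hnat : ∀ x : ⋀[K]^(k+1) W, j (δW x) = δV (extPowMap K W.subtype (k+1) x) := by
    intro x
    have hx : x ∈ Submodule.span K (Set.range (wedgeProd K (k+1) (V := W))) := by
      rw [kes_wedgeProd_span]; exact Submodule.mem_top
    induction hx using Submodule.span_induction with
    | mem y hy =>
        obtain ⟨v, rfl⟩ := hy
        rw [hδW v, kes_extPowMap_wedgeProd, hδV, map_sum]
        refine Finset.sum_congr rfl fun i _ => ?_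
        rw [map_smul, hj, TensorProduct.map_tmul, kes_extPowMap_wedgeProd]
        rfl
    | zero => simp
    | add a b _ _ ha hb => rw [map_add, map_add, map_add, map_add, ha, hb]
    | smul c a _ ha => rw [map_smul, map_smul, map_smul, map_smul, ha]
  -- compatibility of wedge maps: wedgeMul ∘ j = extPowMap (k+1) ∘ w
  have hwedge : ∀ β : W ⊗[K] (⋀[K]^k W),
      kes_wedgeMul K k (j β) = extPowMap K W.subtype (k+1) (w β) := by
    intro β
    induction β with
    | zero => simp
    | tmul x η =>
        have hη : η ∈ Submodule.span K (Set.range (wedgeProd K k (V := W))) := by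
          rw [kes_wedgeProd_span]; exact Submodule.mem_top
        induction hη using Submodule.span_induction with
        | mem y hy =>
            obtain ⟨v, rfl⟩ := hy
            rw [hj, TensorProduct.map_tmul, kes_extPowMap_wedgeProd, kes_wedgeMul_tmul,
              hw, kes_extPowMap_wedgeProd,
              show (W.subtype ∘ Fin.cons x v : Fin (k+1) → V)
                  = Fin.cons (W.subtype x) (W.subtype ∘ v) from
                funext fun i => Fin.cases rfl (fun i => rfl) i]
        | zero => simp
        | add a b _ _ ha hb =>
            rw [TensorProduct.tmul_add, map_add, map_add, map_add, map_add, ha, hb]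
        | smul c a _ ha =>
            rw [TensorProduct.tmul_smul, map_smul, map_smul, map_smul, map_smul, ha]
    | add a b ha hb => rw [map_add, map_add, map_add, map_add, ha, hb]
  -- a retraction of j
  obtain ⟨r, hr⟩ := W.subtype.exists_leftInverse_of_injective W.ker_subtype
  have hjinj : Function.Injective j := by
    have hleft : ∀ β, TensorProduct.map r (extPowMap K r k) (j β) = β := by
      intro β
      induction β with
      | zero => simp
      | tmul x η =>
          rw [hj, TensorProduct.map_tmul, TensorProduct.map_tmul, kes_extPowMap_comp, hr,
            kes_extPowMap_id]
          have h1 : r (W.subtype x) = x := LinearMap.ext_iff.mp hr x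
          rw [h1]
      | add a b ha hb => rw [map_add, map_add, ha, hb]
    intro a b hab
    rw [← hleft a, ← hleft b, hab]
  -- main computation
  obtain ⟨ω, hω⟩ := hα
  have h1 : kes_wedgeMul K k (j α) = ((k : K) + 1) • ω := by
    rw [hj, ← hω]
    exact kes_w_comp_delta K k δV hδV ω
  have h2 : j (δW (w α)) = ((k : K) + 1) • j α := by
    rw [hnat (w α), ← hwedge α, h1, map_smul, hω, hj]
  have h3 : δW (w α) = ((k : K) + 1) • α := hjinj (by rw [h2, map_smul])
  have hk1 : ((k : K) + 1) ≠ 0 := Nat.cast_add_one_ne_zero k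
  constructor
  · exact ⟨((k : K) + 1)⁻¹ • w α, by rw [map_smul, h3, smul_smul, inv_mul_cancel₀ hk1, one_smul]⟩
  · rw [h3, smul_smul, inv_mul_cancel₀ hk1, one_smul]
end

section
/- Let K be a field of characteristic zero and k ≥ 1. Let V be a K-vector space, W ⊆ V a linear subspace, U_W and U_V K-vector spaces, u : U_W → U_V an injective linear map, and m_W : W × W → U_W, m_V : V × V → U_V symmetric bilinear maps such that u(m_W(w, w')) = m_V(w, w') for all w, w' ∈ W. Define the Koszul differentials δ₁^V : ⋀^{k+1} V → V ⊗ ⋀^k V by δ₁^V(v₀ ∧ ⋯ ∧ v_k) = Σ_i (-1)^i v_i ⊗ (v₀ ∧ ⋯ ∧ v̂_i ∧ ⋯ ∧ v_k), and δ₂^V : V ⊗ ⋀^k V → U_V ⊗ ⋀^{k-1} V by δ₂^V(v ⊗ (v₁ ∧ ⋯ ∧ v_k)) = Σ_i (-1)^{i-1} m_V(v, v_i) ⊗ (v₁ ∧ ⋯ ∧ v̂_i ∧ ⋯ ∧ v_k), and similarly δ₁^W, δ₂^W using m_W. Then δ₂^V ∘ δ₁^V = 0, δ₂^W ∘ δ₁^W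 = 0, the inclusion W ⊆ V together with u induces a map of complexes, and the induced linear map on cohomology Ker(δ₂^W)/Im(δ₁^W) → Ker(δ₂^V)/Im(δ₁^V) is injective. -/
open ExteriorAlgebra
open scoped TensorProduct

-- Fin helpers
lemma val_succAbove'' {n : ℕ} (p : Fin (n+1)) (i : Fin n) :
    (p.succAbove i : ℕ) = if (i:ℕ) < (p:ℕ) then (i:ℕ) else (i:ℕ)+1 := by
  rcases lt_or_ge (Fin.castSucc i) p with h | h
  · rw [Fin.succAbove_of_castSucc_lt _ _ h]
    have : (i:ℕ) < (p:ℕ) := h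
    simp [this]
  · rw [Fin.succAbove_of_le_castSucc _ _ h]
    have : ¬ (i:ℕ) < (p:ℕ) := not_lt.mpr h
    simp [this]

lemma parity_lemma {n : ℕ} (i b : Fin (n+2)) (j j' : Fin (n+1))
    (hb : i.succAbove j = b) (hi : b.succAbove j' = i) :
    ((i:ℕ) + (j:ℕ) + ((b:ℕ) + (j':ℕ))) % 2 = 1 := by
  have h1 := congrArg Fin.val hb
  have h2 := congrArg Fin.val hi
  rw [val_succAbove''] at h1 h2
  have hne : (i:ℕ) ≠ (b:ℕ) := by
    intro h
    exact Fin.succAbove_ne i j (hb.trans (Fin.val_injective h).symm)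
  split_ifs at h1 h2 <;> omega

lemma neg_one_pow_of_parity {K : Type*} [Monoid K] [HasDistribNeg K] {a b : ℕ}
    (h : (a + b) % 2 = 1) : ((-1 : K)) ^ a = -((-1 : K)) ^ b := by
  have hb : ((-1 : K)) ^ b * ((-1 : K)) ^ b = 1 := by
    rw [← pow_add]
    exact Even.neg_one_pow ⟨b, rfl⟩
  have hab : ((-1 : K)) ^ (a + b) = -1 := Odd.neg_one_pow ⟨(a+b)/2, by omega⟩
  calc ((-1:K))^a = ((-1:K))^a * (((-1:K))^b * ((-1:K))^b) := by rw [hb, mul_one]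
    _ = ((-1:K))^(a+b) * ((-1:K))^b := by rw [← mul_assoc, ← pow_add]
    _ = -((-1:K))^b := by rw [hab, neg_one_mul]

lemma succAbove_comp_eq {n : ℕ} (i b : Fin (n+2)) (j j' : Fin (n+1))
    (hb : i.succAbove j = b) (hi : b.succAbove j' = i) :
    i.succAbove ∘ j.succAbove = b.succAbove ∘ j'.succAbove := by
  have hbi : b ≠ i := hb ▸ (Fin.succAbove_ne i j)
  have h1 : StrictMono (i.succAbove ∘ j.succAbove) :=
    (Fin.strictMono_succAbove i).comp (Fin.strictMono_succAbove j)
  have h2 : StrictMono (b.succAbove ∘ j'.succAbove) :=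
    (Fin.strictMono_succAbove b).comp (Fin.strictMono_succAbove j')
  haveI : WellFoundedLT (Fin n) := inferInstance
  refine (StrictMono.range_inj (β := Fin n) h1 h2).mp ?_
  have key : ∀ (p q : Fin (n+2)) (r : Fin (n+1)), p.succAbove r = q →
      Set.range (p.succAbove ∘ r.succAbove) = ({p, q} : Set (Fin (n+2)))ᶜ := by
    intro p q r hr
    rw [Set.range_comp, Fin.range_succAbove]
    ext x
    simp only [Set.mem_image, Set.mem_compl_iff, Set.mem_singleton_iff, Set.mem_insert_iff,
      not_or]
    constructor
    · rintro ⟨y, hy, rfl⟩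
      exact ⟨Fin.succAbove_ne p y, fun h => hy (Fin.succAbove_right_injective (h.trans hr.symm))⟩
    · rintro ⟨hx1, hx2⟩
      obtain ⟨y, rfl⟩ := Fin.exists_succAbove_eq hx1
      exact ⟨y, fun h => hx2 (h ▸ hr), rfl⟩
  rw [key i b j hb, key b i j' hi, Set.pair_comm]

-- span lemma
lemma wedgeProd_span (K : Type*) [Field K] (V : Type*) [AddCommGroup V] [Module K V] (n : ℕ) :
    Submodule.span K (Set.range (wedgeProd K (V := V) n)) = ⊤ := by
  apply Submodule.map_injective_of_injective (⋀[K]^n V).injective_subtype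
  rw [Submodule.map_span, Submodule.map_top, Submodule.range_subtype]
  have : (⋀[K]^n V).subtype '' Set.range (wedgeProd K n) = Set.range (ιMulti K n (M := V)) := by
    rw [← Set.range_comp]; rfl
  rw [this]
  exact ιMulti_span_fixedDegree K n

lemma extPowMap_wedge (K : Type*) [Field K] {W V : Type*}
    [AddCommGroup W] [Module K W] [AddCommGroup V] [Module K V]
    (f : W →ₗ[K] V) (n : ℕ) (v : Fin n → W) :
    extPowMap K f n (wedgeProd K n v) = wedgeProd K n (f ∘ v) := by
  apply Subtype.ext
  simp [extPowMap, wedgeProd, LinearMap.restrict_apply, map_apply_ιMulti]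

noncomputable def gInv {n : ℕ} (p : Fin (n+2) × Fin (n+1)) : Fin (n+2) × Fin (n+1) :=
  ⟨p.1.succAbove p.2, Classical.choose (Fin.exists_succAbove_eq (Fin.ne_succAbove p.1 p.2))⟩

lemma gInv_spec {n : ℕ} (p : Fin (n+2) × Fin (n+1)) :
    (p.1.succAbove p.2).succAbove (gInv p).2 = p.1 :=
  Classical.choose_spec (Fin.exists_succAbove_eq (Fin.ne_succAbove p.1 p.2))

lemma gInv_ne {n : ℕ} (p : Fin (n+2) × Fin (n+1)) : gInv p ≠ p :=
  fun h => Fin.succAbove_ne p.1 p.2 (congrArg Prod.fst h)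

lemma gInv_invol {n : ℕ} (p : Fin (n+2) × Fin (n+1)) : gInv (gInv p) = p := by
  have h1 : (gInv p).1.succAbove (gInv p).2 = p.1 := gInv_spec p
  have h2 : ((gInv p).1.succAbove (gInv p).2).succAbove (gInv (gInv p)).2 = (gInv p).1 :=
    gInv_spec (gInv p)
  rw [h1] at h2
  refine Prod.ext ?_ ?_
  · exact h1
  · exact Fin.succAbove_right_injective (p := p.1) h2

lemma delta1_natural (K : Type*) [Field K] {A B : Type*}
    [AddCommGroup A] [Module K A] [AddCommGroup B] [Module K B]
    (f : A →ₗ[K] B) (n : ℕ)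
    (δA : (⋀[K]^(n+2) A) →ₗ[K] A ⊗[K] (⋀[K]^(n+1) A))
    (hA : ∀ v : Fin (n+2) → A,
      δA (wedgeProd K (n+2) v)
        = ∑ i : Fin (n+2), ((-1 : K) ^ (i : ℕ)) •
            (v i ⊗ₜ[K] wedgeProd K (n+1) (fun j => v (i.succAbove j))))
    (δB : (⋀[K]^(n+2) B) →ₗ[K] B ⊗[K] (⋀[K]^(n+1) B))
    (hB : ∀ v : Fin (n+2) → B,
      δB (wedgeProd K (n+2) v)
        = ∑ i : Fin (n+2), ((-1 : K) ^ (i : ℕ)) •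
            (v i ⊗ₜ[K] wedgeProd K (n+1) (fun j => v (i.succAbove j)))) :
    (TensorProduct.map f (extPowMap K f (n+1))) ∘ₗ δA = δB ∘ₗ extPowMap K f (n+2) := by
  apply LinearMap.ext_on (wedgeProd_span K A (n+2))
  rintro _ ⟨v, rfl⟩
  rw [LinearMap.comp_apply, LinearMap.comp_apply, hA, extPowMap_wedge, hB, map_sum]
  refine Finset.sum_congr rfl fun i _ => ?_
  rw [map_smul, TensorProduct.map_tmul, extPowMap_wedge]
  rfl

lemma delta_squared (K : Type*) [Field K] {V U : Type*}
    [AddCommGroup V] [Module K V] [AddCommGroup U] [Module K U]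
    (m : V →ₗ[K] V →ₗ[K] U) (hm : ∀ a b : V, m a b = m b a) (n : ℕ)
    (δ₁ : (⋀[K]^(n+2) V) →ₗ[K] V ⊗[K] (⋀[K]^(n+1) V))
    (hδ₁ : ∀ v : Fin (n+2) → V,
      δ₁ (wedgeProd K (n+2) v)
        = ∑ i : Fin (n+2), ((-1 : K) ^ (i : ℕ)) •
            (v i ⊗ₜ[K] wedgeProd K (n+1) (fun j => v (i.succAbove j))))
    (δ₂ : (V ⊗[K] (⋀[K]^(n+1) V)) →ₗ[K] U ⊗[K] (⋀[K]^n V))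
    (hδ₂ : ∀ (x : V) (v : Fin (n+1) → V),
      δ₂ (x ⊗ₜ[K] wedgeProd K (n+1) v)
        = ∑ i : Fin (n+1), ((-1 : K) ^ (i : ℕ)) •
            (m x (v i) ⊗ₜ[K] wedgeProd K n (fun j => v (i.succAbove j)))) :
    δ₂ ∘ₗ δ₁ = 0 := by
  apply LinearMap.ext_on (wedgeProd_span K V (n+2))
  rintro _ ⟨v, rfl⟩
  rw [LinearMap.comp_apply, hδ₁, map_sum, LinearMap.zero_apply]
  have step : ∀ i : Fin (n+2),
      δ₂ (((-1:K)^(i:ℕ)) • (v i ⊗ₜ[K] wedgeProd K (n+1) fun j => v (i.succAbove j)))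
      = ∑ j : Fin (n+1), ((-1:K)^((i:ℕ)+(j:ℕ))) •
          (m (v i) (v (i.succAbove j)) ⊗ₜ[K]
            wedgeProd K n (fun k => v (i.succAbove (j.succAbove k)))) := by
    intro i
    rw [map_smul, hδ₂, Finset.smul_sum]
    refine Finset.sum_congr rfl fun j _ => ?_
    rw [smul_smul, ← pow_add]
  simp only [step]
  have main : ∑ p : Fin (n+2) × Fin (n+1), ((-1:K)^((p.1:ℕ)+(p.2:ℕ))) •
      (m (v p.1) (v (p.1.succAbove p.2)) ⊗ₜ[K]
        wedgeProd K n (fun k => v (p.1.succAbove (p.2.succAbove k)))) = 0 := by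
    refine Finset.sum_involution (fun p _ => gInv p) ?_
      (fun p _ _ => gInv_ne p) (fun p _ => Finset.mem_univ _) (fun p _ => gInv_invol p)
    intro p _
    obtain ⟨i, j⟩ := p
    have hi2 : (i.succAbove j).succAbove (gInv (i, j)).2 = i := gInv_spec (i, j)
    have hcomp : i.succAbove ∘ j.succAbove
        = (i.succAbove j).succAbove ∘ (gInv (i, j)).2.succAbove :=
      succAbove_comp_eq i (i.succAbove j) j (gInv (i, j)).2 rfl hi2
    have hsign : ((-1:K))^(((i.succAbove j : Fin (n+2)) : ℕ) + ((gInv (i, j)).2 : ℕ))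
        = -((-1:K))^((i:ℕ)+(j:ℕ)) := by
      refine neg_one_pow_of_parity ?_
      have := parity_lemma i (i.succAbove j) j (gInv (i, j)).2 rfl hi2
      omega
    have key : (((-1:K)^(((gInv (i,j)).1 : ℕ)+((gInv (i,j)).2 : ℕ))) •
          (m (v (gInv (i,j)).1) (v ((gInv (i,j)).1.succAbove (gInv (i,j)).2)) ⊗ₜ[K]
            wedgeProd K n (fun k => v ((gInv (i,j)).1.succAbove ((gInv (i,j)).2.succAbove k)))))
        = -(((-1:K)^((i:ℕ)+(j:ℕ))) •
          (m (v i) (v (i.succAbove j)) ⊗ₜ[K]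
            wedgeProd K n (fun k => v (i.succAbove (j.succAbove k))))) := by
      have hfst : (gInv (i,j)).1 = i.succAbove j := rfl
      have hw : (fun k => v ((i.succAbove j).succAbove ((gInv (i,j)).2.succAbove k)))
          = (fun k => v (i.succAbove (j.succAbove k))) := by
        funext k
        exact congrArg v (congrFun hcomp k).symm
      rw [hfst, hi2, hw, hsign, hm (v (i.succAbove j)) (v i)]
      exact neg_smul ((-1:K)^((i:ℕ)+(j:ℕ)))
        ((m (v i)) (v (i.succAbove j)) ⊗ₜ[K] wedgeProd K n fun k => v (i.succAbove (j.succAbove k)))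
    rw [key]
    abel
  exact (Fintype.sum_prod_type _).symm.trans main

/-- Let `K` be a field of characteristic zero and `k = n + 1 ≥ 1`.
Let `V` be a `K`-vector space, `W ⊆ V` a subspace, `u : U_W → U_V` injective linear, and
`m_W`, `m_V` compatible symmetric bilinear maps.  Let `δ₁, δ₂` be the Koszul differentials
`⋀^{k+1} → V ⊗ ⋀^k → U ⊗ ⋀^{k-1}` for `V` and for `W`.  Then `δ₂ ∘ δ₁ = 0` on both sides,
the inclusion `W ⊆ V` together with `u` induces a map of complexes, and the induced map on
Koszul cohomology `Ker δ₂^W / Im δ₁^W → Ker δ₂^V / Im δ₁^V` is injective (expressed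
elementwise: any class killed in the target is already a boundary). -/
theorem koszul_cohomology_map_injective_of_subspace
    (K : Type*) [Field K] [CharZero K] (V : Type*) [AddCommGroup V] [Module K V]
    (W : Submodule K V)
    (UW : Type*) [AddCommGroup UW] [Module K UW]
    (UV : Type*) [AddCommGroup UV] [Module K UV]
    (u : UW →ₗ[K] UV) (hu : Function.Injective u)
    (mW : W →ₗ[K] W →ₗ[K] UW) (hmW : ∀ a b : W, mW a b = mW b a)
    (mV : V →ₗ[K] V →ₗ[K] UV) (hmV : ∀ a b : V, mV a b = mV b a)
    (hcompat : ∀ a b : W, u (mW a b) = mV (a : V) (b : V))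
    (n : ℕ)
    -- the Koszul differentials for `V` :
    (δ₁V : (⋀[K]^(n+2) V) →ₗ[K] V ⊗[K] (⋀[K]^(n+1) V))
    (hδ₁V : ∀ v : Fin (n+2) → V,
      δ₁V (wedgeProd K (n+2) v)
        = ∑ i : Fin (n+2), ((-1 : K) ^ (i : ℕ)) •
            (v i ⊗ₜ[K] wedgeProd K (n+1) (fun j => v (i.succAbove j))))
    (δ₂V : (V ⊗[K] (⋀[K]^(n+1) V)) →ₗ[K] UV ⊗[K] (⋀[K]^n V))
    (hδ₂V : ∀ (x : V) (v : Fin (n+1) → V),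
      δ₂V (x ⊗ₜ[K] wedgeProd K (n+1) v)
        = ∑ i : Fin (n+1), ((-1 : K) ^ (i : ℕ)) •
            (mV x (v i) ⊗ₜ[K] wedgeProd K n (fun j => v (i.succAbove j))))
    -- the Koszul differentials for `W` :
    (δ₁W : (⋀[K]^(n+2) W) →ₗ[K] W ⊗[K] (⋀[K]^(n+1) W))
    (hδ₁W : ∀ v : Fin (n+2) → W,
      δ₁W (wedgeProd K (n+2) v)
        = ∑ i : Fin (n+2), ((-1 : K) ^ (i : ℕ)) •
            (v i ⊗ₜ[K] wedgeProd K (n+1) (fun j => v (i.succAbove j))))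
    (δ₂W : (W ⊗[K] (⋀[K]^(n+1) W)) →ₗ[K] UW ⊗[K] (⋀[K]^n W))
    (hδ₂W : ∀ (x : W) (v : Fin (n+1) → W),
      δ₂W (x ⊗ₜ[K] wedgeProd K (n+1) v)
        = ∑ i : Fin (n+1), ((-1 : K) ^ (i : ℕ)) •
            (mW x (v i) ⊗ₜ[K] wedgeProd K n (fun j => v (i.succAbove j)))) :
    -- the two Koszul complexes are complexes:
    δ₂V ∘ₗ δ₁V = 0 ∧ δ₂W ∘ₗ δ₁W = 0 ∧
    -- the inclusion `W ⊆ V` together with `u` induces a map of complexes: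
    (TensorProduct.map W.subtype (extPowMap K W.subtype (n+1))) ∘ₗ δ₁W
        = δ₁V ∘ₗ extPowMap K W.subtype (n+2) ∧
    (TensorProduct.map u (extPowMap K W.subtype n)) ∘ₗ δ₂W
        = δ₂V ∘ₗ TensorProduct.map W.subtype (extPowMap K W.subtype (n+1)) ∧
    -- injectivity of the induced map `Ker δ₂W / Im δ₁W → Ker δ₂V / Im δ₁V` on cohomology:
    (∀ α : W ⊗[K] (⋀[K]^(n+1) W), δ₂W α = 0 →
      TensorProduct.map W.subtype (extPowMap K W.subtype (n+1)) α ∈ LinearMap.range δ₁V →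
      α ∈ LinearMap.range δ₁W) := by
  
  refine ⟨delta_squared K mV hmV n δ₁V hδ₁V δ₂V hδ₂V,
          delta_squared K mW hmW n δ₁W hδ₁W δ₂W hδ₂W,
          delta1_natural K W.subtype n δ₁W hδ₁W δ₁V hδ₁V, ?_, ?_⟩
  · -- δ₂ chain map
    apply TensorProduct.ext'
    intro x y
    have hy : y ∈ Submodule.span K (Set.range (wedgeProd K (V := W) (n+1))) := by
      rw [wedgeProd_span]; exact Submodule.mem_top
    induction hy using Submodule.span_induction with
    | mem y hy =>
        obtain ⟨v, rfl⟩ := hy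
        rw [LinearMap.comp_apply, LinearMap.comp_apply, TensorProduct.map_tmul,
          extPowMap_wedge, hδ₂W, hδ₂V, map_sum]
        refine Finset.sum_congr rfl fun i _ => ?_
        rw [map_smul, TensorProduct.map_tmul, extPowMap_wedge, hcompat]
        rfl
    | zero => simp
    | add a b _ _ ha hb => simp only [TensorProduct.tmul_add, map_add, ha, hb]
    | smul c a _ ha => simp only [TensorProduct.tmul_smul, map_smul, ha]
  · -- injectivity on cohomology
    intro α hα hmem
    obtain ⟨β, hβ⟩ := hmem
    obtain ⟨π, hπ⟩ := W.subtype.exists_leftInverse_of_injective W.ker_subtype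
    have hnat := delta1_natural K π n δ₁V hδ₁V δ₁W hδ₁W
    have hretrN : ∀ m : ℕ,
        extPowMap K π m ∘ₗ extPowMap K W.subtype m = LinearMap.id := by
      intro m
      apply LinearMap.ext_on (wedgeProd_span K W m)
      rintro _ ⟨v, rfl⟩
      rw [LinearMap.comp_apply, extPowMap_wedge, extPowMap_wedge, LinearMap.id_apply]
      congr 1
      funext j
      exact LinearMap.ext_iff.mp hπ (v j)
    refine ⟨extPowMap K π (n+2) β, ?_⟩
    have h1 : TensorProduct.map π (extPowMap K π (n+1))
        (TensorProduct.map W.subtype (extPowMap K W.subtype (n+1)) α) = α := by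
      rw [← LinearMap.comp_apply, ← TensorProduct.map_comp, hπ, hretrN,
        TensorProduct.map_id, LinearMap.id_apply]
    have h2 := LinearMap.congr_fun hnat β
    rw [LinearMap.comp_apply, LinearMap.comp_apply, hβ, h1] at h2
    exact h2.symm
end

section
/- Let K be a field of characteristic zero, V and U K-vector spaces, d : V × V → U an alternating bilinear map, and m ≥ 1 an integer. Write S^m V for the m-th symmetric power of V. Let c₃ : ⋀³V → ⋀²V ⊗ V be the linear map with c₃(v₁ ∧ v₂ ∧ v₃) = (v₁ ∧ v₂) ⊗ v₃ − (v₁ ∧ v₃) ⊗ v₂ + (v₂ ∧ v₃) ⊗ v₁, let p_m : S^m V → V ⊗ S^{m-1} V be the polarization map determined by p_m(v^m) = m · v ⊗ v^{m-1}, let d̃ : V ⊗ V → U and d̄ : ⋀²V → U be the linear maps induced by d, and define μ : V ⊗ S^m V → U ⊗ S^{m-1} V as (d̃ ⊗ id) ∘ (id_V ⊗ p_m). Let μ'' : ⋀³V ⊗ S^m V → ⋀²U ⊗ S^{m-1} V be the composite of c₃ ⊗ id_{S^m V}, then id_{⋀²V} ⊗ μ : ⋀²V ⊗ (V ⊗ S^m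 V) → ⋀²V ⊗ U ⊗ S^{m-1} V, then (d̄ ⊗ id_U ⊗ id) followed by the wedge U ⊗ U → ⋀²U. Then for all α₁, α₂, α₃ ∈ V: μ''(α₁ ∧ α₂ ∧ α₃ ⊗ α₃^m) = 2m · (d(α₂, α₃) ∧ d(α₁, α₃)) ⊗ α₃^{m-1}. -/
open ExteriorAlgebra
open scoped TensorProduct

/-- The submodule of symmetry relations inside the `m`-th tensor power of `V`. -/
noncomputable def symRel (K : Type*) [Field K] (V : Type*) [AddCommGroup V] [Module K V]
    (m : ℕ) : Submodule K (⨂[K]^m V) :=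
  Submodule.span K
    {x | ∃ (v : Fin m → V) (σ : Equiv.Perm (Fin m)),
      x = PiTensorProduct.tprod K v - PiTensorProduct.tprod K (v ∘ σ)}

/-- The `m`-th symmetric power `S^m V` of a vector space `V`:  the quotient of the `m`-th
tensor power `V^{⊗ m}` by the symmetry relations (the degree-`m` component of the symmetric
algebra). -/
noncomputable abbrev SymPow (K : Type*) [Field K] (V : Type*) [AddCommGroup V] [Module K V]
    (m : ℕ) : Type _ :=
  (⨂[K]^m V) ⧸ symRel K V m

/-- The `m`-th power `v^m ∈ S^m V` of a vector `v ∈ V`. -/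
noncomputable def SymPow.pow (K : Type*) [Field K] {V : Type*} [AddCommGroup V] [Module K V]
    (m : ℕ) (v : V) : SymPow K V m :=
  Submodule.Quotient.mk (PiTensorProduct.tprod K (fun _ : Fin m => v))


lemma wedge_anti (K : Type*) [Field K] {U : Type*} [AddCommGroup U] [Module K U]
    (a b : U) : wedgeProd K 2 ![b, a] = - wedgeProd K 2 ![a, b] := by
  apply Subtype.ext
  show ιMulti K 2 ![b, a] = -(ιMulti K 2 ![a, b])
  have h : ![b, a] = ![a, b] ∘ Equiv.swap (0 : Fin 2) 1 := by
    funext i; fin_cases i <;> simp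
  rw [h, AlternatingMap.map_swap _ _ (by decide)]

set_option maxHeartbeats 1000000 in
set_option synthInstance.maxHeartbeats 400000 in
/-- Let `K` be a field of characteristic zero, `d : V × V → U` an
alternating bilinear map and `m ≥ 1`.  Let `c₃ : ⋀³V → ⋀²V ⊗ V` be the comultiplication
`v₁∧v₂∧v₃ ↦ (v₁∧v₂)⊗v₃ − (v₁∧v₃)⊗v₂ + (v₂∧v₃)⊗v₁`, `p : S^m V → V ⊗ S^{m−1} V` the
polarization map with `p(v^m) = m • v ⊗ v^{m−1}`, `d̃ : V ⊗ V → U` and `d̄ : ⋀²V → U` the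
maps induced by `d`, `μ := (d̃ ⊗ id) ∘ (id_V ⊗ p)` and `μ''` the composite of `c₃ ⊗ id`,
`id_{⋀²V} ⊗ μ`, `d̄ ⊗ id ⊗ id` and the wedge `U ⊗ U → ⋀²U`.  Then for all `α₁ α₂ α₃`,
`μ''(α₁∧α₂∧α₃ ⊗ α₃^m) = 2m • (d(α₂,α₃) ∧ d(α₁,α₃)) ⊗ α₃^{m−1}`. -/
theorem koszul_symmetric_power_identity
    (K : Type*) [Field K] [CharZero K]
    (V : Type*) [AddCommGroup V] [Module K V]
    (U : Type*) [AddCommGroup U] [Module K U]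
    (d : V →ₗ[K] V →ₗ[K] U) (hd : ∀ v : V, d v v = 0)
    (m : ℕ) (hm : 1 ≤ m)
    (c₃ : (⋀[K]^3 V) →ₗ[K] (⋀[K]^2 V) ⊗[K] V)
    (hc₃ : ∀ v₁ v₂ v₃ : V,
      c₃ (wedgeProd K 3 ![v₁, v₂, v₃])
        = wedgeProd K 2 ![v₁, v₂] ⊗ₜ[K] v₃ - wedgeProd K 2 ![v₁, v₃] ⊗ₜ[K] v₂
            + wedgeProd K 2 ![v₂, v₃] ⊗ₜ[K] v₁)
    (p : SymPow K V m →ₗ[K] V ⊗[K] SymPow K V (m-1))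
    (hp : ∀ v : V, p (SymPow.pow K m v) = (m : K) • (v ⊗ₜ[K] SymPow.pow K (m-1) v))
    (dtil : (V ⊗[K] V) →ₗ[K] U) (hdtil : ∀ x y : V, dtil (x ⊗ₜ[K] y) = d x y)
    (dbar : (⋀[K]^2 V) →ₗ[K] U) (hdbar : ∀ x y : V, dbar (wedgeProd K 2 ![x, y]) = d x y)
    (wU : (U ⊗[K] U) →ₗ[K] ⋀[K]^2 U)
    (hwU : ∀ a b : U, wU (a ⊗ₜ[K] b) = wedgeProd K 2 ![a, b])
    (μ : (V ⊗[K] SymPow K V m) →ₗ[K] U ⊗[K] SymPow K V (m-1))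
    (hμ : μ = (TensorProduct.map dtil LinearMap.id)
        ∘ₗ (TensorProduct.assoc K V V (SymPow K V (m-1))).symm.toLinearMap
        ∘ₗ (TensorProduct.map (LinearMap.id : V →ₗ[K] V) p))
    (μ'' : ((⋀[K]^3 V) ⊗[K] SymPow K V m) →ₗ[K] (⋀[K]^2 U) ⊗[K] SymPow K V (m-1))
    (hμ'' : μ'' = (TensorProduct.map wU LinearMap.id)
        ∘ₗ (TensorProduct.assoc K U U (SymPow K V (m-1))).symm.toLinearMap
        ∘ₗ (TensorProduct.map dbar LinearMap.id)
        ∘ₗ (TensorProduct.map (LinearMap.id : (⋀[K]^2 V) →ₗ[K] (⋀[K]^2 V)) μ)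
        ∘ₗ (TensorProduct.assoc K (⋀[K]^2 V) V (SymPow K V m)).toLinearMap
        ∘ₗ (TensorProduct.map c₃ (LinearMap.id : SymPow K V m →ₗ[K] SymPow K V m))) :
    ∀ α₁ α₂ α₃ : V,
      μ'' (wedgeProd K 3 ![α₁, α₂, α₃] ⊗ₜ[K] SymPow.pow K m α₃)
        = (2 * m : K) • (wedgeProd K 2 ![d α₂ α₃, d α₁ α₃] ⊗ₜ[K] SymPow.pow K (m-1) α₃) := by
  intro α₁ α₂ α₃
  have hμap : ∀ a : V, μ (a ⊗ₜ[K] SymPow.pow K m α₃)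
      = (m : K) • ((d a α₃) ⊗ₜ[K] SymPow.pow K (m-1) α₃) := by
    intro a
    simp [hμ, hp, hdtil, TensorProduct.tmul_smul, TensorProduct.smul_tmul']
  rw [hμ'']
  simp only [LinearMap.comp_apply, TensorProduct.map_tmul, LinearMap.id_apply, hc₃,
    TensorProduct.sub_tmul, TensorProduct.add_tmul, map_sub, map_add,
    TensorProduct.assoc_tmul, hμap, hd, TensorProduct.zero_tmul, smul_zero,
    TensorProduct.tmul_zero, TensorProduct.tmul_smul, map_smul,
    TensorProduct.assoc_symm_tmul, hdbar, hwU, LinearEquiv.coe_coe]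
  rw [TensorProduct.sub_tmul (wedgeProd K 2 ![α₁, α₂] ⊗ₜ[K] α₃) (wedgeProd K 2 ![α₁, α₃] ⊗ₜ[K] α₂) (SymPow.pow K m α₃)]
  simp only [LinearMap.comp_apply, TensorProduct.map_tmul, LinearMap.id_apply, hc₃,
    TensorProduct.sub_tmul, TensorProduct.add_tmul, map_sub, map_add,
    TensorProduct.assoc_tmul, hμap, hd, TensorProduct.zero_tmul, smul_zero,
    TensorProduct.tmul_zero, TensorProduct.tmul_smul, map_smul,
    TensorProduct.assoc_symm_tmul, hdbar, hwU, LinearEquiv.coe_coe]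
  rw [wedge_anti K (d α₁ α₃) (d α₂ α₃)]
  simp only [map_zero, TensorProduct.neg_tmul]
  module
end
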